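/- arXiv:1806.07949 — 4 statements merged into one kernel-verified Lean document; each statement's English description precedes it below -/
import Mathlib

section
/- The series ∑_{m=0}^∞ a/((m+1)(m+a)) with a = 13/10 equals (13/3)·(10/3 − log 20 − (√(10−2√5)/(√5+1))·π/2 + (1/2)·(√5·log(√5+2) − log √5)). -/
lemma quad_pos {p : ℝ} (hp : p^2 < 4) (u : ℝ) : 0 < u^2 + p*u + 1 := by
  nlinarith [sq_nonneg (2*u + p)]

lemma piece (k c p r u : ℝ) (hr0 : 0 < r) (hr : r^2 = 4*(4 - p^2)) (hp : p^2 < 4) :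
    HasDerivAt (fun x : ℝ => k * Real.log (x^2 + p*x + 1) + c * Real.arctan ((2*x + p) * (2/r)))
      ((2*k*u + k*p + c*r/4) / (u^2 + p*u + 1)) u := by
  have hq : 0 < u^2 + p*u + 1 := quad_pos hp u
  have hderiv_q : HasDerivAt (fun x : ℝ => x^2 + p*x + 1) (2*u + p) u := by
    simpa using ((hasDerivAt_pow 2 u).add ((hasDerivAt_id u).const_mul p)).add_const 1
  have h1 : HasDerivAt (fun x : ℝ => k * Real.log (x^2 + p*x + 1))
      (k * ((2*u + p) / (u^2 + p*u + 1))) u := (hderiv_q.log hq.ne').const_mul k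
  have hinner : HasDerivAt (fun x : ℝ => (2*x + p) * (2/r)) (2 * (2/r)) u := by
    simpa using (((hasDerivAt_id u).const_mul 2).add_const p).mul_const (2/r)
  have h2 : HasDerivAt (fun x : ℝ => c * Real.arctan ((2*x + p) * (2/r)))
      (c * (1 / (1 + ((2*u + p) * (2/r))^2) * (2 * (2/r)))) u := by
    exact ((Real.hasDerivAt_arctan ((2*u + p) * (2/r))).comp u hinner).const_mul c
  refine (h1.add h2).congr_deriv (Eq.symm ?_)
  have h3 : 0 < 1 + ((2*u + p) * (2/r))^2 := by positivity
  field_simp [show u*(u+p)+1 ≠ 0 by nlinarith [hq]]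
  linear_combination (c*r)*hr

noncomputable def Gfun (s : ℝ) (u : ℝ) : ℝ :=
  10*u^2 - 2/(u+1)
  + (((-5+s)/2)*u - s)/(u^2 + ((1+s)/2)*u + 1)
  + (((-5-s)/2)*u + s)/(u^2 + ((1-s)/2)*u + 1)
  + (((-3-s)/2)*u + 1)/(u^2 + (-((1+s)/2))*u + 1)
  + (((-3+s)/2)*u + 1)/(u^2 + (-((1-s)/2))*u + 1)

noncomputable def Ffun (s σ τ : ℝ) (u : ℝ) : ℝ :=
  (10/3)*u^3 - 2*Real.log (u+1)
  + (((-5+s)/4) * Real.log (u^2 + ((1+s)/2)*u + 1) + (-(2*s/σ)) * Real.arctan ((2*u + (1+s)/2) * (2/σ)))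
  + (((-5-s)/4) * Real.log (u^2 + ((1-s)/2)*u + 1) + (2*s/τ) * Real.arctan ((2*u + (1-s)/2) * (2/τ)))
  + (((-3-s)/4) * Real.log (u^2 + (-((1+s)/2))*u + 1) + (-(2*s/σ)) * Real.arctan ((2*u + (-((1+s)/2))) * (2/σ)))
  + (((-3+s)/4) * Real.log (u^2 + (-((1-s)/2))*u + 1) + (2*s/τ) * Real.arctan ((2*u + (-((1-s)/2))) * (2/τ)))

section main
variable {s σ τ : ℝ} (hs : s^2 = 5) (hs0 : 0 < s)
  (hσ : σ^2 = 10 - 2*s) (hσ0 : 0 < σ) (hτ : τ^2 = 10 + 2*s) (hτ0 : 0 < τ)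

include hs hs0 in
lemma s_lt : s < 3 := by nlinarith
include hs hs0 in
lemma s_gt : 2 < s := by nlinarith

include hs hs0 in
lemma hp1 : ((1+s)/2)^2 < 4 := by nlinarith
include hs hs0 in
lemma hp2 : ((1-s)/2)^2 < 4 := by nlinarith
include hs hs0 in
lemma hp3 : (-((1+s)/2))^2 < 4 := by nlinarith
include hs hs0 in
lemma hp4 : (-((1-s)/2))^2 < 4 := by nlinarith

include hs hs0 hσ hσ0 hτ hτ0 in
lemma F_hasDeriv (u : ℝ) (hu : -1 < u) :
    HasDerivAt (Ffun s σ τ) (Gfun s u) u := by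
  have hu1 : u + 1 ≠ 0 := by linarith
  have hcube : HasDerivAt (fun x : ℝ => (10/3)*x^3) (10*u^2) u := by
    have := (hasDerivAt_pow 3 u).const_mul (10/3 : ℝ)
    refine this.congr_deriv (Eq.symm ?_); push_cast; ring
  have hlog1 : HasDerivAt (fun x : ℝ => 2*Real.log (x+1)) (2/(u+1)) u := by
    have := (((hasDerivAt_id u).add_const 1).log hu1).const_mul (2:ℝ)
    refine this.congr_deriv (Eq.symm ?_); field_simp; rw [id, div_self hu1]
  have P1 := piece ((-5+s)/4) (-(2*s/σ)) ((1+s)/2) σ u hσ0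
    (by linear_combination hσ + hs) (hp1 hs hs0)
  have P2 := piece ((-5-s)/4) (2*s/τ) ((1-s)/2) τ u hτ0
    (by linear_combination hτ + hs) (hp2 hs hs0)
  have P3 := piece ((-3-s)/4) (-(2*s/σ)) (-((1+s)/2)) σ u hσ0
    (by linear_combination hσ + hs) (hp3 hs hs0)
  have P4 := piece ((-3+s)/4) (2*s/τ) (-((1-s)/2)) τ u hτ0
    (by linear_combination hτ + hs) (hp4 hs hs0)
  have H := ((((hcube.sub hlog1).add P1).add P2).add P3).add P4
  refine H.congr_deriv (Eq.symm ?_)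
  unfold Gfun
  have hcσ : (-(2*s/σ))*σ/4 = -(s/2) := by field_simp [hσ0.ne']; ring
  have hcτ : (2*s/τ)*τ/4 = s/2 := by field_simp [hτ0.ne']; ring
  have e1 : 2*((-5+s)/4)*u + ((-5+s)/4)*((1+s)/2) + (-(2*s/σ))*σ/4 = ((-5+s)/2)*u - s := by
    rw [hcσ]; linear_combination (1/8)*hs
  have e2 : 2*((-5-s)/4)*u + ((-5-s)/4)*((1-s)/2) + (2*s/τ)*τ/4 = ((-5-s)/2)*u + s := by
    rw [hcτ]; linear_combination (1/8)*hs
  have e3 : 2*((-3-s)/4)*u + ((-3-s)/4)*(-((1+s)/2)) + (-(2*s/σ))*σ/4 = ((-3-s)/2)*u + 1 := by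
    rw [hcσ]; linear_combination (1/8)*hs
  have e4 : 2*((-3+s)/4)*u + ((-3+s)/4)*(-((1-s)/2)) + (2*s/τ)*τ/4 = ((-3+s)/2)*u + 1 := by
    rw [hcτ]; linear_combination (1/8)*hs
  rw [e1, e2, e3, e4]


include hs hs0 in
lemma G_eq {u : ℝ} (hu0 : 0 < u) (hu1 : u < 1) :
    (10*u^9 - 10*u^12) * (1 - u^10)⁻¹ = Gfun s u := by
  have hq1 := quad_pos (hp1 hs hs0) u
  have hq2 := quad_pos (hp2 hs hs0) u
  have hq3 := quad_pos (hp3 hs hs0) u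
  have hq4 := quad_pos (hp4 hs hs0) u
  have hP5 : (0:ℝ) < u^4+u^3+u^2+u+1 := by positivity
  have hP10 : (0:ℝ) < u^4-u^3+u^2-u+1 := by nlinarith [sq_nonneg (u^2-u), sq_nonneg (u-1), sq_nonneg u]
  have hu10 : u^10 < 1 := pow_lt_one₀ hu0.le hu1 (by norm_num)
  have h1u : (0:ℝ) < 1 - u^10 := by linarith
  have hu1' : (0:ℝ) < u + 1 := by linarith
  have hI1 : (((-5+s)/2)*u - s)/(u^2 + ((1+s)/2)*u + 1) + (((-5-s)/2)*u + s)/(u^2 + ((1-s)/2)*u + 1)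
      = (-5*u^3-5*u^2)/(u^4+u^3+u^2+u+1) := by
    rw [div_add_div _ _ hq1.ne' hq2.ne',
      show (u^2 + ((1+s)/2)*u + 1) * (u^2 + ((1-s)/2)*u + 1) = u^4+u^3+u^2+u+1 by
        linear_combination (-u^2/4)*hs]
    congr 1
    linear_combination (u - u^2/2)*hs
  have hI2 : (((-3-s)/2)*u + 1)/(u^2 + (-((1+s)/2))*u + 1) + (((-3+s)/2)*u + 1)/(u^2 + (-((1-s)/2))*u + 1)
      = (-3*u^3+u^2-4*u+2)/(u^4-u^3+u^2-u+1) := by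
    rw [div_add_div _ _ hq3.ne' hq4.ne',
      show (u^2 + (-((1+s)/2))*u + 1) * (u^2 + (-((1-s)/2))*u + 1) = u^4-u^3+u^2-u+1 by
        linear_combination (-u^2/4)*hs]
    congr 1
    linear_combination (-u^2/2)*hs
  have hG : Gfun s u = 10*u^2 - 2/(u+1)
      + ((((-5+s)/2)*u - s)/(u^2 + ((1+s)/2)*u + 1) + (((-5-s)/2)*u + s)/(u^2 + ((1-s)/2)*u + 1))
      + ((((-3-s)/2)*u + 1)/(u^2 + (-((1+s)/2))*u + 1) + (((-3+s)/2)*u + 1)/(u^2 + (-((1-s)/2))*u + 1)) := by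
    unfold Gfun; ring
  rw [hG, hI1, hI2]
  rw [inv_eq_one_div]
  field_simp [show u * (u * (u * (u - 1) + 1) - 1) + 1 ≠ 0 from ne_of_gt (by linarith)]
  ring

include hs hs0 in
lemma tsum_eq_G {u : ℝ} (hu0 : 0 < u) (hu1 : u < 1) :
    ∑' m : ℕ, (10*u^(10*m+9) - 10*u^(10*m+12)) = Gfun s u := by
  have hx0 : (0:ℝ) ≤ u^10 := by positivity
  have hx1 : u^10 < 1 := pow_lt_one₀ hu0.le hu1 (by norm_num)
  have hterm : ∀ m : ℕ, (10*u^(10*m+9) - 10*u^(10*m+12)) = (10*u^9 - 10*u^12) * (u^10)^m := by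
    intro m
    rw [← pow_mul]
    rw [pow_add, pow_add]
    ring
  rw [tsum_congr hterm, tsum_mul_left, tsum_geometric_of_lt_one hx0 hx1]
  exact G_eq hs hs0 hu0 hu1


include hs hs0 in
lemma G_contOn : ContinuousOn (Gfun s) (Set.Icc (0:ℝ) 1) := by
  unfold Gfun
  apply ContinuousOn.add
  apply ContinuousOn.add
  apply ContinuousOn.add
  apply ContinuousOn.add
  apply ContinuousOn.sub
  · fun_prop
  · exact ContinuousOn.div (by fun_prop) (by fun_prop)
      (fun x hx => by have := hx.1; positivity)
  · exact ContinuousOn.div (by fun_prop) (by fun_prop)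
      (fun x hx => (quad_pos (hp1 hs hs0) x).ne')
  · exact ContinuousOn.div (by fun_prop) (by fun_prop)
      (fun x hx => (quad_pos (hp2 hs hs0) x).ne')
  · exact ContinuousOn.div (by fun_prop) (by fun_prop)
      (fun x hx => (quad_pos (hp3 hs hs0) x).ne')
  · exact ContinuousOn.div (by fun_prop) (by fun_prop)
      (fun x hx => (quad_pos (hp4 hs hs0) x).ne')

include hs hs0 hσ hσ0 hτ hτ0 in
lemma integral_G : ∫ u in (0:ℝ)..1, Gfun s u = Ffun s σ τ 1 - Ffun s σ τ 0 := by
  apply intervalIntegral.integral_eq_sub_of_hasDerivAt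
  · intro u hu
    rw [Set.uIcc_of_le (by norm_num : (0:ℝ) ≤ 1)] at hu
    exact F_hasDeriv hs hs0 hσ hσ0 hτ hτ0 u (by linarith [hu.1])
  · apply ContinuousOn.intervalIntegrable
    rw [Set.uIcc_of_le (by norm_num : (0:ℝ) ≤ 1)]
    exact G_contOn hs hs0


lemma arctan_pair {x y : ℝ} (hx : 0 < x) (hxy : x * y = 1) :
    Real.arctan x + Real.arctan y = Real.pi/2 := by
  have hy : y = x⁻¹ := by field_simp [hx.ne'] at hxy ⊢; linarith
  rw [hy, Real.arctan_inv_of_pos hx]; ring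

include hs hs0 hσ hσ0 hτ hτ0 in
lemma F_at_0 : Ffun s σ τ 0 = 0 := by
  have n1 : ((2*(0:ℝ) + (-((1+s)/2))) * (2/σ)) = -((2*(0:ℝ) + ((1+s)/2)) * (2/σ)) := by ring
  have n2 : ((2*(0:ℝ) + (-((1-s)/2))) * (2/τ)) = -((2*(0:ℝ) + ((1-s)/2)) * (2/τ)) := by ring
  unfold Ffun
  rw [n1, n2, Real.arctan_neg, Real.arctan_neg]
  norm_num

include hs hs0 hσ hσ0 hτ hτ0 in
lemma F_at_1 : Ffun s σ τ 1 =
    10/3 - 2*Real.log 2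
    + ((-5+s)/4) * Real.log ((5+s)/2) + ((-5-s)/4) * Real.log ((5-s)/2)
    + ((-3-s)/4) * Real.log ((3-s)/2) + ((-3+s)/4) * Real.log ((3+s)/2)
    + (2*s/τ - 2*s/σ) * (Real.pi/2) := by
  have h2 := s_gt hs hs0
  have h3 := s_lt hs hs0
  have pσ : Real.arctan ((2*(1:ℝ) + (1+s)/2) * (2/σ)) + Real.arctan ((2*(1:ℝ) + (-((1+s)/2))) * (2/σ)) = Real.pi/2 := by
    apply arctan_pair
    · positivity
    · field_simp
      linear_combination -hs - hσ
  have pτ : Real.arctan ((2*(1:ℝ) + (1-s)/2) * (2/τ)) + Real.arctan ((2*(1:ℝ) + (-((1-s)/2))) * (2/τ)) = Real.pi/2 := by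
    apply arctan_pair
    · have : 0 < 2*(1:ℝ) + (1-s)/2 := by linarith
      positivity
    · field_simp
      linear_combination -hs - hτ
  have q1 : (1:ℝ)^2 + ((1+s)/2)*1 + 1 = (5+s)/2 := by ring
  have q2 : (1:ℝ)^2 + ((1-s)/2)*1 + 1 = (5-s)/2 := by ring
  have q3 : (1:ℝ)^2 + (-((1+s)/2))*1 + 1 = (3-s)/2 := by ring
  have q4 : (1:ℝ)^2 + (-((1-s)/2))*1 + 1 = (3+s)/2 := by ring
  unfold Ffun
  rw [q1, q2, q3, q4]
  rw [show (1:ℝ)+1 = 2 by norm_num]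
  linear_combination (-(2*s/σ))*pσ + (2*s/τ)*pτ


include hs hs0 hσ hσ0 hτ hτ0 in
lemma hστ : σ * τ = 4*s := by
  have h0 : (σ*τ - 4*s)*(σ*τ + 4*s) = 0 := by
    linear_combination τ^2*hσ + (10-2*s)*hτ - 20*hs
  have hpos : 0 < σ*τ + 4*s := by positivity
  rcases mul_eq_zero.1 h0 with h | h
  · linarith
  · linarith

include hs hs0 hσ hσ0 hτ hτ0 in
lemma hA : (τ - σ)*(s+1) = 2*σ := by
  have hst := hστ hs hs0 hσ hσ0 hτ hτ0
  have hτσ : σ < τ := by nlinarith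
  have hsq : ((τ-σ)*(s+1))^2 = (2*σ)^2 := by
    linear_combination ((s+1)^2-4)*hσ + (s+1)^2*hτ - 2*(s+1)^2*hst + (-8*s+4)*hs
  have h0 : ((τ-σ)*(s+1) - 2*σ)*((τ-σ)*(s+1) + 2*σ) = 0 := by linear_combination hsq
  have hpos : 0 < (τ-σ)*(s+1) + 2*σ := by
    have : 0 < (τ-σ)*(s+1) := mul_pos (by linarith) (by linarith)
    linarith
  rcases mul_eq_zero.1 h0 with h | h
  · linarith
  · linarith

include hs hs0 hσ hσ0 hτ hτ0 in
lemma hπc : 2*s/τ - 2*s/σ = -(σ/(s+1)) := by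
  have hst := hστ hs hs0 hσ hσ0 hτ hτ0
  have ha := hA hs hs0 hσ hσ0 hτ hτ0
  have hs1 : s + 1 ≠ 0 := by positivity
  field_simp
  linear_combination (-2*s)*ha + σ*hst

include hs hs0 hσ hσ0 hτ hτ0 in
lemma F_eval : Ffun s σ τ 1 - Ffun s σ τ 0 =
    10/3 - Real.log 20 - σ/(s+1)*Real.pi/2 + (1/2)*(s*Real.log (s+2) - Real.log s) := by
  have h2 := s_gt hs hs0
  have h3 := s_lt hs hs0
  have hφ : (0:ℝ) < (1+s)/2 := by linarith
  have L1 : Real.log ((5+s)/2) = Real.log s + Real.log ((1+s)/2) := by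
    rw [show (5+s)/2 = s*((1+s)/2) by linear_combination (-(1/2))*hs,
      Real.log_mul hs0.ne' hφ.ne']
  have L2 : Real.log ((5-s)/2) = Real.log s - Real.log ((1+s)/2) := by
    rw [show (5-s)/2 = s/((1+s)/2) by rw [eq_div_iff hφ.ne']; linear_combination (-(1/4))*hs,
      Real.log_div hs0.ne' hφ.ne']
  have L3 : Real.log ((3+s)/2) = 2 * Real.log ((1+s)/2) := by
    rw [show (3+s)/2 = ((1+s)/2)^2 by linear_combination (-(1/4))*hs, Real.log_pow]
    norm_num
  have L4 : Real.log ((3-s)/2) = -(2 * Real.log ((1+s)/2)) := by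
    rw [show (3-s)/2 = (((1+s)/2)^2)⁻¹ by
        rw [inv_eq_one_div, eq_div_iff (by positivity)]; linear_combination ((1-s)/8)*hs,
      Real.log_inv, Real.log_pow]
    norm_num
  have L5 : Real.log (s+2) = 3 * Real.log ((1+s)/2) := by
    rw [show s+2 = ((1+s)/2)^3 by linear_combination (-(s+3)/8)*hs, Real.log_pow]
    norm_num
  have L6 : Real.log 20 = 2*Real.log 2 + 2*Real.log s := by
    rw [show (20:ℝ) = (2*s)^2 by linear_combination (-4)*hs, Real.log_pow,
      Real.log_mul two_ne_zero hs0.ne']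
    push_cast; ring
  rw [F_at_1 hs hs0 hσ hσ0 hτ hτ0, F_at_0 hs hs0 hσ hσ0 hτ hτ0,
    L1, L2, L3, L4, L5, L6, hπc hs hs0 hσ hσ0 hτ hτ0]
  ring

end main


open MeasureTheory in
theorem stmt_13 :
    (∑' m : ℕ, (13/10 : ℝ) / ((m + 1) * (m + (13/10 : ℝ)))) = (13/3) * (10/3 - Real.log 20 - (Real.sqrt (10 - 2 * Real.sqrt 5) / (Real.sqrt 5 + 1)) * Real.pi / 2 + (1/2) * (Real.sqrt 5 * Real.log (Real.sqrt 5 + 2) - Real.log (Real.sqrt 5))) := by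
  set s := Real.sqrt 5 with hs_def
  have hs : s^2 = 5 := Real.sq_sqrt (by norm_num)
  have hs0 : 0 < s := Real.sqrt_pos.mpr (by norm_num)
  have h2 := s_gt hs hs0
  have h3 := s_lt hs hs0
  set σ := Real.sqrt (10 - 2*Real.sqrt 5) with hσ_def
  set τ := Real.sqrt (10 + 2*Real.sqrt 5) with hτ_def
  have hσarg : (0:ℝ) < 10 - 2*Real.sqrt 5 := by rw [← hs_def]; linarith
  have hτarg : (0:ℝ) < 10 + 2*Real.sqrt 5 := by rw [← hs_def]; linarith
  have hσ : σ^2 = 10 - 2*s := by rw [hσ_def, Real.sq_sqrt hσarg.le, hs_def]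
  have hτ : τ^2 = 10 + 2*s := by rw [hτ_def, Real.sq_sqrt hτarg.le, hs_def]
  have hσ0 : 0 < σ := Real.sqrt_pos.mpr hσarg
  have hτ0 : 0 < τ := Real.sqrt_pos.mpr hτarg
  -- the sequence of integrands
  set f : ℕ → ℝ → ℝ := fun m u => 10*u^(10*m+9) - 10*u^(10*m+12) with hf_def
  set r : ℕ → ℝ := fun m => 1/((m:ℝ)+1) - 1/((m:ℝ)+13/10) with hr_def
  have hm1 : ∀ m : ℕ, (0:ℝ) < (m:ℝ)+1 := fun m => by positivity
  have hm13 : ∀ m : ℕ, (0:ℝ) < (m:ℝ)+13/10 := fun m => by positivity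
  -- each term of the series
  have hterm : ∀ m : ℕ, (13/10 : ℝ) / (((m:ℝ) + 1) * ((m:ℝ) + (13/10 : ℝ))) = (13/3) * r m := by
    intro m
    rw [hr_def]
    have h1 := (hm1 m).ne'
    have h2 := (hm13 m).ne'
    field_simp
    ring
  -- integral of each f m
  have hfint : ∀ m : ℕ, ∫ u in Set.Ioo (0:ℝ) 1, f m u = r m := by
    intro m
    rw [← integral_Ioc_eq_integral_Ioo, ← intervalIntegral.integral_of_le zero_le_one]
    have hi1 : IntervalIntegrable (fun u : ℝ => 10*u^(10*m+9)) volume 0 1 :=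
      (intervalIntegral.intervalIntegrable_pow _).const_mul 10
    have hi2 : IntervalIntegrable (fun u : ℝ => 10*u^(10*m+12)) volume 0 1 :=
      (intervalIntegral.intervalIntegrable_pow _).const_mul 10
    rw [hf_def]
    simp only []
    rw [intervalIntegral.integral_sub hi1 hi2, intervalIntegral.integral_const_mul,
      intervalIntegral.integral_const_mul, integral_pow, integral_pow]
    rw [hr_def]
    have h1 := (hm1 m).ne'
    have h2 := (hm13 m).ne'
    push_cast
    rw [one_pow, one_pow, zero_pow (by positivity), zero_pow (by positivity)]
    field_simp
    ring
  -- nonnegativity of f m on Ioo 0 1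
  have hfnonneg : ∀ m : ℕ, ∀ u ∈ Set.Ioo (0:ℝ) 1, 0 ≤ f m u := by
    intro m u hu
    have : u^(10*m+12) ≤ u^(10*m+9) :=
      pow_le_pow_of_le_one hu.1.le hu.2.le (by omega)
    simp only [hf_def]
    linarith
  -- integrability
  have hfcont : ∀ m : ℕ, Continuous (f m) := by
    intro m; rw [hf_def]; fun_prop
  have hfI : ∀ m : ℕ, Integrable (f m) (volume.restrict (Set.Ioo (0:ℝ) 1)) := by
    intro m
    exact (((hfcont m).integrableOn_Icc (μ := volume)).mono_set Set.Ioo_subset_Icc_self)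
  -- summability of r
  have hrnonneg : ∀ m : ℕ, 0 ≤ r m := by
    intro m
    rw [hr_def]
    have h1 := hm1 m
    have h2 := hm13 m
    rw [sub_nonneg, div_le_div_iff₀ h2 h1]
    nlinarith
  have hrsum : Summable r := by
    have hbase : Summable (fun n : ℕ => 1/((n:ℝ))^2) := Real.summable_one_div_nat_pow.mpr one_lt_two
    have hshift : Summable (fun n : ℕ => 1/((n:ℝ)+1)^2) := by
      have := (summable_nat_add_iff (f := fun n : ℕ => 1/((n:ℝ))^2) 1).mpr hbase
      refine this.congr fun n => ?_
      push_cast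
      ring
    refine Summable.of_nonneg_of_le hrnonneg (fun m => ?_) hshift
    show 1/((m:ℝ)+1) - 1/((m:ℝ)+13/10) ≤ 1/((m:ℝ)+1)^2
    have h1 := hm1 m
    have h2 := hm13 m
    rw [div_sub_div _ _ h1.ne' h2.ne']
    rw [div_le_div_iff₀ (by positivity) (by positivity)]
    nlinarith
  -- summability of integral norms
  have hnormint : ∀ m : ℕ, ∫ u in Set.Ioo (0:ℝ) 1, ‖f m u‖ = r m := by
    intro m
    rw [← hfint m]
    apply setIntegral_congr_fun measurableSet_Ioo
    intro u hu
    exact Real.norm_of_nonneg (hfnonneg m u hu)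
  -- swap sum and integral
  have hswap : ∑' m : ℕ, r m = ∫ u in Set.Ioo (0:ℝ) 1, ∑' m : ℕ, f m u := by
    rw [show (r : ℕ → ℝ) = fun m => ∫ u in Set.Ioo (0:ℝ) 1, f m u from funext fun m => (hfint m).symm]
    apply integral_tsum_of_summable_integral_norm hfI
    apply Summable.congr hrsum
    intro m
    exact (hnormint m).symm
  have hGint : ∫ u in Set.Ioo (0:ℝ) 1, ∑' m : ℕ, f m u = ∫ u in Set.Ioo (0:ℝ) 1, Gfun s u := by
    apply setIntegral_congr_fun measurableSet_Ioo
    intro u hu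
    exact tsum_eq_G hs hs0 hu.1 hu.2
  have hfinal : ∫ u in Set.Ioo (0:ℝ) 1, Gfun s u =
      10/3 - Real.log 20 - σ/(s+1)*Real.pi/2 + (1/2)*(s*Real.log (s+2) - Real.log s) := by
    rw [← integral_Ioc_eq_integral_Ioo, ← intervalIntegral.integral_of_le zero_le_one,
      integral_G hs hs0 hσ hσ0 hτ hτ0, F_eval hs hs0 hσ hσ0 hτ hτ0]
  calc (∑' m : ℕ, (13/10 : ℝ) / ((m + 1) * (m + (13/10 : ℝ))))
      = ∑' m : ℕ, (13/3) * r m := tsum_congr hterm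
    _ = (13/3) * ∑' m : ℕ, r m := tsum_mul_left
    _ = (13/3) * (10/3 - Real.log 20 - σ/(s+1)*Real.pi/2 + (1/2)*(s*Real.log (s+2) - Real.log s)) := by
        rw [hswap, hGint, hfinal]
    _ = (13/3) * (10/3 - Real.log 20 - (σ/(s + 1)) * Real.pi / 2 + (1/2) * (s * Real.log (s + 2) - Real.log s)) := by
        ring
end

section
/- The series ∑_{m=0}^∞ a/((m+1)(m+a)) with a = 13/12 equals 13·(12 − log 24 − (2+√3)·π/2 + √3·log(2−√3) − log √3). -/
set_option maxHeartbeats 1000000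
open Real MeasureTheory intervalIntegral

noncomputable def Qp (x : ℝ) : ℝ :=
  x^11+x^10+x^9+x^8+x^7+x^6+x^5+x^4+x^3+x^2+x+1

lemma key (x s : ℝ) (hs : s^2 = 3) (hs0 : 0 < s) (hx : 0 ≤ x) :
    1 + (1/12) * ( -(2 * (1/(x+1)))
    + (s-2)/2 * ((2*x - s)/(x^2 - s*x+1))
    - 2/(1+(2*x - s)^2)
    - (1/2) * ((2*x-1)/(x^2 - x + 1))
    - s * ((2/s)/(1+((2*x-1)/s)^2))
    - (2*x)/(x^2+1)
    - 2 * (1/(1+x^2))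
    - (3/2) * ((2*x+1)/(x^2+x+1))
    - s * ((2/s)/(1+((2*x+1)/s)^2))
    - (s+2)/2 * ((2*x+s)/(x^2+s*x+1))
    - 2/(1+(2*x+s)^2) )
    = x^11 / Qp x := by
  have h1 : (0:ℝ) < x + 1 := by linarith
  have h2 : (0:ℝ) < x^2 - s*x + 1 := by nlinarith [sq_nonneg (2*x - s)]
  have h3 : (0:ℝ) < x^2 - x + 1 := by nlinarith [sq_nonneg (2*x-1)]
  have h5 : (0:ℝ) < x^2 + x + 1 := by nlinarith [sq_nonneg (2*x+1)]
  have h6 : (0:ℝ) < x^2 + s*x + 1 := by nlinarith [sq_nonneg (2*x + s)]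
  have h8 : (0:ℝ) < x^4 - x^2 + 1 := by nlinarith [sq_nonneg (2*x^2-1)]
  have hsne : s ≠ 0 := ne_of_gt hs0
  have e1 : 2/(1+(2*x - s)^2) = 1/(2*(x^2 - s*x+1)) := by
    rw [div_eq_div_iff (by positivity) (by linarith)]; linear_combination -hs
  have e2 : s * ((2/s)/(1+((2*x-1)/s)^2)) = 3/(2*(x^2-x+1)) := by
    rw [div_pow, hs, eq_div_iff (by linarith)]
    field_simp
    ring
  have e3 : s * ((2/s)/(1+((2*x+1)/s)^2)) = 3/(2*(x^2+x+1)) := by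
    rw [div_pow, hs, eq_div_iff (by linarith)]
    field_simp
    ring
  have e4 : 2/(1+(2*x + s)^2) = 1/(2*(x^2 + s*x+1)) := by
    rw [div_eq_div_iff (by positivity) (by linarith)]; linear_combination -hs
  have e5 : (s-2)/2 * ((2*x - s)/(x^2 - s*x+1)) - 1/(2*(x^2 - s*x+1))
      - (s+2)/2 * ((2*x+s)/(x^2+s*x+1)) - 1/(2*(x^2 + s*x+1))
      = -2*(x+1)*(2*x^2-3*x+2)/(x^4 - x^2 + 1) := by
    have h7 : x^4 - x^2 + 1 = (x^2-s*x+1)*(x^2+s*x+1) := by linear_combination x^2*hs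
    rw [h7]
    have h2' : x * (x - s) + 1 ≠ 0 := by nlinarith
    have h6' : x * (x + s) + 1 ≠ 0 := by nlinarith
    field_simp
    linear_combination (2*x^2 + 4*x - 2) * hs
  rw [e1, e2, e3, e4]
  have main : 1 + (1/12) * ( -(2 * (1/(x+1)))
      + (-2*(x+1)*(2*x^2-3*x+2)/(x^4 - x^2 + 1))
      - (1/2) * ((2*x-1)/(x^2 - x + 1))
      - 3/(2*(x^2-x+1))
      - (2*x)/(x^2+1)
      - 2 * (1/(1+x^2))
      - (3/2) * ((2*x+1)/(x^2+x+1))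
      - 3/(2*(x^2+x+1)) )
      = x^11 / Qp x := by
    have hQ : Qp x = (x+1)*(x^2+1)*(x^2-x+1)*(x^2+x+1)*(x^4-x^2+1) := by
      unfold Qp; ring
    rw [hQ]
    have hh1 : x + (1:ℝ) ≠ 0 := ne_of_gt h1
    have hh3 : x^2 - x + 1 ≠ 0 := ne_of_gt h3
    have hh5 : x^2 + x + 1 ≠ 0 := ne_of_gt h5
    have hh8 : x^4 - x^2 + 1 ≠ 0 := ne_of_gt h8
    have hh4 : x^2 + 1 ≠ 0 := by positivity
    have hh4' : 1 + x^2 ≠ 0 := by positivity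
    have hh3' : x * (x - 1) + 1 ≠ 0 := by nlinarith
    have hh5' : x * (x + 1) + 1 ≠ 0 := by nlinarith
    have hh8' : x ^ 2 * (x ^ 2 - 1) + 1 ≠ 0 := by nlinarith
    field_simp
    ring
  linear_combination main + (1/12) * e5

-- arctan value lemmas
lemma arctan_sqrt3 : arctan (Real.sqrt 3) = π/3 :=
  arctan_eq_of_tan_eq tan_pi_div_three ⟨by linarith [pi_pos], by linarith [pi_pos]⟩

lemma arctan_inv_sqrt3 : arctan (1/Real.sqrt 3) = π/6 :=
  arctan_eq_of_tan_eq tan_pi_div_six ⟨by linarith [pi_pos], by linarith [pi_pos]⟩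

lemma sqrt3_gt_one : (1:ℝ) < Real.sqrt 3 := by
  nlinarith [Real.sq_sqrt (by norm_num : (3:ℝ) ≥ 0), Real.sqrt_nonneg 3]

lemma tan_5pi12 : Real.tan (π/4 + π/6) = 2 + Real.sqrt 3 := by
  have h3 : Real.sqrt 3 ^ 2 = 3 := Real.sq_sqrt (by norm_num)
  have h2pos : (0:ℝ) < Real.sqrt 2 := Real.sqrt_pos.mpr (by norm_num)
  have hden : Real.cos (π/4 + π/6) ≠ 0 := by
    rw [Real.cos_add, Real.cos_pi_div_four, Real.cos_pi_div_six, Real.sin_pi_div_four,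
      Real.sin_pi_div_six]
    have := sqrt3_gt_one
    intro h
    nlinarith
  rw [Real.tan_eq_sin_div_cos, Real.sin_add, Real.cos_add, Real.sin_pi_div_four,
    Real.cos_pi_div_four, Real.sin_pi_div_six, Real.cos_pi_div_six, div_eq_iff (by
      have := sqrt3_gt_one; nlinarith)]
  linear_combination (-(Real.sqrt 2)/4) * h3

lemma arctan_two_add_sqrt3 : arctan (2 + Real.sqrt 3) = π/4 + π/6 :=
  arctan_eq_of_tan_eq tan_5pi12 ⟨by linarith [pi_pos], by linarith [pi_pos]⟩

lemma tan_pi12 : Real.tan (π/3 - π/4) = 2 - Real.sqrt 3 := by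
  have h3 : Real.sqrt 3 ^ 2 = 3 := Real.sq_sqrt (by norm_num)
  rw [Real.tan_eq_sin_div_cos, Real.sin_sub, Real.cos_sub, Real.sin_pi_div_four,
    Real.cos_pi_div_four, Real.sin_pi_div_three, Real.cos_pi_div_three, div_eq_iff (by
      have := sqrt3_gt_one
      have h2pos : (0:ℝ) < Real.sqrt 2 := Real.sqrt_pos.mpr (by norm_num)
      nlinarith)]
  linear_combination ((Real.sqrt 2)/4) * h3

lemma arctan_two_sub_sqrt3 : arctan (2 - Real.sqrt 3) = π/3 - π/4 :=
  arctan_eq_of_tan_eq tan_pi12 ⟨by linarith [pi_pos], by linarith [pi_pos]⟩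

lemma log_two_add_sqrt3 : Real.log (2 + Real.sqrt 3) = - Real.log (2 - Real.sqrt 3) := by
  have h3 : Real.sqrt 3 ^ 2 = 3 := Real.sq_sqrt (by norm_num)
  have hne : (2 - Real.sqrt 3) ≠ 0 := by nlinarith [sqrt3_gt_one]
  have h : (2 + Real.sqrt 3) = (2 - Real.sqrt 3)⁻¹ := by
    rw [inv_eq_one_div, eq_div_iff hne]
    linear_combination -h3
  rw [h, Real.log_inv]

lemma sqrt3_pos : (0:ℝ) < Real.sqrt 3 := Real.sqrt_pos.mpr (by norm_num)

lemma two_sub_sqrt3_pos : (0:ℝ) < 2 - Real.sqrt 3 := by nlinarith [sqrt3_gt_one, Real.sq_sqrt (by norm_num : (3:ℝ) ≥ 0)]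

lemma log24 : Real.log 24 = 3 * Real.log 2 + Real.log 3 := by
  rw [show (24:ℝ) = 2^3 * 3 by norm_num, Real.log_mul (by norm_num) (by norm_num), Real.log_pow]
  push_cast; ring

lemma log_sqrt3 : Real.log (Real.sqrt 3) = Real.log 3 / 2 := Real.log_sqrt (by norm_num)

noncomputable def Fa (x : ℝ) : ℝ :=
  x + (1/12) * ( -(2 * Real.log (x+1))
    + (Real.sqrt 3 - 2)/2 * Real.log (x^2 - Real.sqrt 3*x + 1)
    - Real.arctan (2*x - Real.sqrt 3)
    - (1/2) * Real.log (x^2 - x + 1)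
    - Real.sqrt 3 * Real.arctan ((2*x - 1)/Real.sqrt 3)
    - Real.log (x^2 + 1)
    - 2 * Real.arctan x
    - (3/2) * Real.log (x^2 + x + 1)
    - Real.sqrt 3 * Real.arctan ((2*x + 1)/Real.sqrt 3)
    - (Real.sqrt 3 + 2)/2 * Real.log (x^2 + Real.sqrt 3*x + 1)
    - Real.arctan (2*x + Real.sqrt 3) )


lemma Fa_deriv (x : ℝ) (hx : 0 ≤ x) : HasDerivAt Fa (x^11 / Qp x) x := by
  set s := Real.sqrt 3 with hsdef
  have hs : s^2 = 3 := Real.sq_sqrt (by norm_num)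
  have hs0 : (0:ℝ) < s := Real.sqrt_pos.mpr (by norm_num)
  have h1 : (0:ℝ) < x + 1 := by linarith
  have h2 : (0:ℝ) < x^2 - s*x + 1 := by nlinarith [sq_nonneg (2*x - s)]
  have h3 : (0:ℝ) < x^2 - x + 1 := by nlinarith [sq_nonneg (2*x-1)]
  have h4 : (0:ℝ) < x^2 + 1 := by positivity
  have h5 : (0:ℝ) < x^2 + x + 1 := by positivity
  have h6 : (0:ℝ) < x^2 + s*x + 1 := by positivity
  have p1 : HasDerivAt (fun x : ℝ => Real.log (x+1)) (1/(x+1)) x := by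
    have := ((hasDerivAt_id x).add_const (1:ℝ)).log (ne_of_gt h1)
    simpa using this
  have i2 : HasDerivAt (fun x : ℝ => x^2 - s*x + 1) (2*x - s) x := by
    have := ((hasDerivAt_pow 2 x).sub ((hasDerivAt_id x).const_mul s)).add_const (1:ℝ)
    simpa using this
  have p2 : HasDerivAt (fun x : ℝ => Real.log (x^2 - s*x + 1)) ((2*x - s)/(x^2 - s*x+1)) x :=
    i2.log (ne_of_gt h2)
  have p3 : HasDerivAt (fun x : ℝ => Real.arctan (2*x - s)) (2/(1+(2*x - s)^2)) x := by
    have := (((hasDerivAt_id x).const_mul (2:ℝ)).sub_const s).arctan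
    simpa [div_eq_inv_mul, mul_comm] using this
  have i4 : HasDerivAt (fun x : ℝ => x^2 - x + 1) (2*x - 1) x := by
    have := ((hasDerivAt_pow 2 x).sub (hasDerivAt_id x)).add_const (1:ℝ)
    simpa using this
  have p4 : HasDerivAt (fun x : ℝ => Real.log (x^2 - x + 1)) ((2*x-1)/(x^2 - x + 1)) x :=
    i4.log (ne_of_gt h3)
  have p5 : HasDerivAt (fun x : ℝ => Real.arctan ((2*x - 1)/s)) ((2/s)/(1+((2*x-1)/s)^2)) x := by
    have := ((((hasDerivAt_id x).const_mul (2:ℝ)).sub_const (1:ℝ)).div_const s).arctan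
    simpa [div_eq_inv_mul, mul_comm] using this
  have i6 : HasDerivAt (fun x : ℝ => x^2 + 1) (2*x) x := by
    have := (hasDerivAt_pow 2 x).add_const (1:ℝ)
    simpa using this
  have p6 : HasDerivAt (fun x : ℝ => Real.log (x^2 + 1)) ((2*x)/(x^2+1)) x :=
    i6.log (ne_of_gt h4)
  have p7 : HasDerivAt (fun x : ℝ => Real.arctan x) (1/(1+x^2)) x := Real.hasDerivAt_arctan x
  have i8 : HasDerivAt (fun x : ℝ => x^2 + x + 1) (2*x + 1) x := by
    have := (((hasDerivAt_pow 2 x).add (hasDerivAt_id x))).add_const (1:ℝ)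
    simpa using this
  have p8 : HasDerivAt (fun x : ℝ => Real.log (x^2 + x + 1)) ((2*x+1)/(x^2 + x + 1)) x :=
    i8.log (ne_of_gt h5)
  have p9 : HasDerivAt (fun x : ℝ => Real.arctan ((2*x + 1)/s)) ((2/s)/(1+((2*x+1)/s)^2)) x := by
    have := ((((hasDerivAt_id x).const_mul (2:ℝ)).add_const (1:ℝ)).div_const s).arctan
    simpa [div_eq_inv_mul, mul_comm] using this
  have i10 : HasDerivAt (fun x : ℝ => x^2 + s*x + 1) (2*x + s) x := by
    have := ((hasDerivAt_pow 2 x).add ((hasDerivAt_id x).const_mul s)).add_const (1:ℝ)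
    simpa using this
  have p10 : HasDerivAt (fun x : ℝ => Real.log (x^2 + s*x + 1)) ((2*x+s)/(x^2 + s*x+1)) x :=
    i10.log (ne_of_gt h6)
  have p11 : HasDerivAt (fun x : ℝ => Real.arctan (2*x + s)) (2/(1+(2*x + s)^2)) x := by
    have := (((hasDerivAt_id x).const_mul (2:ℝ)).add_const s).arctan
    simpa [div_eq_inv_mul, mul_comm] using this
  have big := (((((((((((p1.const_mul (2:ℝ)).neg.add (p2.const_mul ((s - 2)/2))).sub p3).sub
    (p4.const_mul (1/2))).sub (p5.const_mul s)).sub p6).sub (p7.const_mul 2)).sub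
    (p8.const_mul (3/2))).sub (p9.const_mul s)).sub (p10.const_mul ((s + 2)/2))).sub p11)
  have tot := (hasDerivAt_id x).add (big.const_mul (1/12))
  rw [← key x s hs hs0 hx]
  exact tot

lemma Fval : 12 * (Fa 1 - Fa 0) =
    12 - Real.log 24 - (2 + Real.sqrt 3) * π / 2 + Real.sqrt 3 * Real.log (2 - Real.sqrt 3)
      - Real.log (Real.sqrt 3) := by
  have hs0 : (0:ℝ) < Real.sqrt 3 := Real.sqrt_pos.mpr (by norm_num)
  have h3 : Real.sqrt 3 * Real.sqrt 3 = 3 := Real.mul_self_sqrt (by norm_num)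
  have hF1 : Fa 1 = 1 + (1/12) * ( -(2 * Real.log 2)
      + (Real.sqrt 3 - 2)/2 * Real.log (2 - Real.sqrt 3)
      - (π/3 - π/4)
      - Real.sqrt 3 * (π/6)
      - Real.log 2
      - 2 * (π/4)
      - (3/2) * Real.log 3
      - Real.sqrt 3 * (π/3)
      - (Real.sqrt 3 + 2)/2 * (- Real.log (2 - Real.sqrt 3))
      - (π/4 + π/6) ) := by
    unfold Fa
    rw [show ((1:ℝ)+1) = 2 by norm_num,
      show ((1:ℝ)^2 - Real.sqrt 3*1 + 1) = 2 - Real.sqrt 3 by ring,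
      show (2*(1:ℝ) - Real.sqrt 3) = 2 - Real.sqrt 3 by ring,
      show ((1:ℝ)^2 - 1 + 1) = 1 by ring,
      show ((2*(1:ℝ) - 1)/Real.sqrt 3) = 1/Real.sqrt 3 by norm_num,
      show ((1:ℝ)^2 + 1 + 1) = 3 by norm_num,
      show ((1:ℝ)^2 + 1) = 2 by norm_num,
      show ((2*(1:ℝ) + 1)/Real.sqrt 3) = Real.sqrt 3 by
        rw [eq_comm, eq_div_iff (ne_of_gt hs0)]; rw [h3]; norm_num,
      show ((1:ℝ)^2 + Real.sqrt 3*1 + 1) = 2 + Real.sqrt 3 by ring,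
      show (2*(1:ℝ) + Real.sqrt 3) = 2 + Real.sqrt 3 by ring,
      Real.log_one, arctan_one, arctan_sqrt3, arctan_inv_sqrt3, arctan_two_add_sqrt3,
      arctan_two_sub_sqrt3, log_two_add_sqrt3]
    ring
  have hF0 : Fa 0 = (1/12) * ( - (-(π/3))
      - Real.sqrt 3 * (-(π/6))
      - Real.sqrt 3 * (π/6)
      - (π/3) ) := by
    unfold Fa
    rw [show ((0:ℝ)+1) = 1 by norm_num,
      show ((0:ℝ)^2 - Real.sqrt 3*0 + 1) = 1 by ring,
      show (2*(0:ℝ) - Real.sqrt 3) = -Real.sqrt 3 by ring,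
      show ((0:ℝ)^2 - 0 + 1) = 1 by ring,
      show ((2*(0:ℝ) - 1)/Real.sqrt 3) = -(1/Real.sqrt 3) by ring,
      show ((0:ℝ)^2 + 1) = 1 by norm_num,
      show ((0:ℝ)^2 + 0 + 1) = 1 by norm_num,
      show ((2*(0:ℝ) + 1)/Real.sqrt 3) = 1/Real.sqrt 3 by ring,
      show ((0:ℝ)^2 + Real.sqrt 3*0 + 1) = 1 by ring,
      show (2*(0:ℝ) + Real.sqrt 3) = Real.sqrt 3 by ring,
      Real.log_one, Real.arctan_zero, Real.arctan_neg, Real.arctan_neg,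
      arctan_sqrt3, arctan_inv_sqrt3]
    ring
  rw [hF1, hF0, log24, log_sqrt3]
  ring

lemma Qp_pos {x : ℝ} (hx : 0 ≤ x) : 0 < Qp x := by unfold Qp; positivity

lemma Qp_cont : Continuous Qp := by unfold Qp; fun_prop

lemma g_contOn : ContinuousOn (fun x : ℝ => x^11 / Qp x) (Set.Icc 0 1) :=
  (continuous_pow 11).continuousOn.div Qp_cont.continuousOn (fun x hx => ne_of_gt (Qp_pos hx.1))

lemma g_intble : IntervalIntegrable (fun x : ℝ => x^11 / Qp x) volume 0 1 := by
  apply ContinuousOn.intervalIntegrable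
  rw [Set.uIcc_of_le (by norm_num : (0:ℝ) ≤ 1)]
  exact g_contOn

lemma gN_intble (N : ℕ) :
    IntervalIntegrable (fun x : ℝ => x^(12*N) * (x^11 / Qp x)) volume 0 1 := by
  apply ContinuousOn.intervalIntegrable
  rw [Set.uIcc_of_le (by norm_num : (0:ℝ) ≤ 1)]
  exact (continuous_pow (12*N)).continuousOn.mul g_contOn

lemma hFTC : ∫ x in (0:ℝ)..1, x^11 / Qp x = Fa 1 - Fa 0 :=
  integral_eq_sub_of_hasDerivAt (fun x hx => Fa_deriv x (by
    rw [Set.uIcc_of_le (by norm_num : (0:ℝ) ≤ 1)] at hx; exact hx.1)) g_intble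

lemma E_nonneg (N : ℕ) : 0 ≤ ∫ x in (0:ℝ)..1, x^(12*N) * (x^11 / Qp x) := by
  apply intervalIntegral.integral_nonneg (by norm_num : (0:ℝ) ≤ 1)
  intro u hu
  have h0 := hu.1
  have := Qp_pos h0
  positivity

lemma E_le (N : ℕ) : (∫ x in (0:ℝ)..1, x^(12*N) * (x^11 / Qp x)) ≤ 1/((N:ℝ)+1) := by
  have step1 : (∫ x in (0:ℝ)..1, x^(12*N) * (x^11 / Qp x)) ≤ ∫ x in (0:ℝ)..1, x^(12*N) := by
    apply intervalIntegral.integral_mono_on (by norm_num : (0:ℝ) ≤ 1) (gN_intble N)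
      (intervalIntegrable_pow _)
    intro x hx
    have h0 := hx.1
    have hq := Qp_pos h0
    have hle : x^11 / Qp x ≤ 1 := by
      rw [div_le_one hq]
      have h10 : (0:ℝ) ≤ x^10+x^9+x^8+x^7+x^6+x^5+x^4+x^3+x^2+x+1 := by positivity
      unfold Qp; linarith
    calc x^(12*N) * (x^11 / Qp x) ≤ x^(12*N) * 1 := by
          apply mul_le_mul_of_nonneg_left hle (pow_nonneg h0 _)
      _ = x^(12*N) := mul_one _
  have step2 : (∫ x in (0:ℝ)..1, x^(12*N) : ℝ) = 1/((12*N:ℝ)+1) := by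
    rw [integral_pow]
    push_cast
    norm_num
  have step3 : (1:ℝ)/((12*N:ℝ)+1) ≤ 1/((N:ℝ)+1) := by
    apply one_div_le_one_div_of_le (by positivity)
    have : (0:ℝ) ≤ (N:ℝ) := Nat.cast_nonneg N
    linarith
  linarith [step1, step2 ▸ step1]

lemma hE : Filter.Tendsto (fun N : ℕ => ∫ x in (0:ℝ)..1, x^(12*N) * (x^11 / Qp x))
    Filter.atTop (nhds 0) :=
  squeeze_zero E_nonneg E_le tendsto_one_div_add_atTop_nhds_zero_nat

lemma sum_id (N : ℕ) {x : ℝ} (hx : 0 ≤ x) :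
    ∑ m ∈ Finset.range N, (x^(12*m+11) - x^(12*m+12))
      = x^11/Qp x - x^(12*N) * (x^11/Qp x) := by
  have hq := (Qp_pos hx).ne'
  induction N with
  | zero => simp
  | succ n ih =>
    have ht : x^(12*n+11) - x^(12*n+12) = (x^(12*n) - x^(12*(n+1))) * (x^11/Qp x) := by
      rw [← mul_div_assoc, eq_div_iff hq]
      unfold Qp; ring
    rw [Finset.sum_range_succ, ih, ht]; ring

lemma psum (N : ℕ) : ∑ m ∈ Finset.range N, ((1:ℝ)/(12*(m:ℝ)+12) - 1/(12*(m:ℝ)+13))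
    = (∫ x in (0:ℝ)..1, x^11/Qp x) - ∫ x in (0:ℝ)..1, x^(12*N) * (x^11/Qp x) := by
  have h1 : ∀ m : ℕ, ((1:ℝ)/(12*(m:ℝ)+12) - 1/(12*(m:ℝ)+13))
      = ∫ x in (0:ℝ)..1, (x^(12*m+11) - x^(12*m+12)) := by
    intro m
    rw [intervalIntegral.integral_sub (intervalIntegrable_pow _) (intervalIntegrable_pow _),
      integral_pow, integral_pow]
    have d1 : (0:ℝ) < 12*(m:ℝ)+12 := by positivity
    have d2 : (0:ℝ) < 12*(m:ℝ)+13 := by positivity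
    rw [one_pow, one_pow, zero_pow (by omega), zero_pow (by omega)]
    push_cast
    have d1' := ne_of_gt d1
    have d2' := ne_of_gt d2
    field_simp
    ring
  rw [Finset.sum_congr rfl (fun m _ => h1 m), ← intervalIntegral.integral_finset_sum
    (fun m _ => (intervalIntegrable_pow _).sub (intervalIntegrable_pow _)),
    ← intervalIntegral.integral_sub g_intble (gN_intble N)]
  apply intervalIntegral.integral_congr
  intro x hx
  rw [Set.uIcc_of_le (by norm_num : (0:ℝ) ≤ 1)] at hx
  exact sum_id N hx.1

theorem stmt_14 :
    (∑' m : ℕ, (13/12 : ℝ) / ((m + 1) * (m + (13/12 : ℝ)))) = 13 * (12 - Real.log 24 - (2 + Real.sqrt 3) * Real.pi / 2 + Real.sqrt 3 * Real.log (2 - Real.sqrt 3) - Real.log (Real.sqrt 3)) := by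
  have hterm : ∀ m : ℕ, (13/12 : ℝ) / ((m + 1) * (m + 13/12))
      = 156 * ((1:ℝ)/(12*(m:ℝ)+12) - 1/(12*(m:ℝ)+13)) := by
    intro m
    have h1 : (0:ℝ) < (m:ℝ)+1 := by positivity
    have h2 : (0:ℝ) < (m:ℝ)+13/12 := by positivity
    have h3 : (0:ℝ) < 12*(m:ℝ)+12 := by positivity
    have h4 : (0:ℝ) < 12*(m:ℝ)+13 := by positivity
    have h1' := ne_of_gt h1
    have h2' := ne_of_gt h2
    have h3' := ne_of_gt h3
    have h4' := ne_of_gt h4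
    field_simp
    ring
  have hnn : ∀ m : ℕ, 0 ≤ (13/12 : ℝ) / ((m + 1) * (m + 13/12)) := by
    intro m; positivity
  have hS : HasSum (fun m : ℕ => (13/12 : ℝ) / ((m + 1) * (m + 13/12)))
      (156 * (Fa 1 - Fa 0)) := by
    rw [hasSum_iff_tendsto_nat_of_nonneg hnn]
    have heq : ∀ N : ℕ, ∑ m ∈ Finset.range N, (13/12 : ℝ) / ((m + 1) * (m + 13/12))
        = 156 * ((Fa 1 - Fa 0) - ∫ x in (0:ℝ)..1, x^(12*N) * (x^11/Qp x)) := by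
      intro N
      rw [Finset.sum_congr rfl (fun m _ => hterm m), ← Finset.mul_sum, psum N, hFTC]
    have hconst : Filter.Tendsto (fun _ : ℕ => Fa 1 - Fa 0) Filter.atTop (nhds (Fa 1 - Fa 0)) :=
      tendsto_const_nhds
    have hlim := Filter.Tendsto.const_mul (156:ℝ) (hconst.sub hE)
    simp only [sub_zero] at hlim
    exact Filter.Tendsto.congr (fun N => (heq N).symm) hlim
  rw [hS.tsum_eq, ← Fval]
  ring
end

section
/- The series ∑_{m=0}^∞ a/((m+1)(m+a)) with a = 15/8 equals (15/196)·(32 + 14(1+√2)·π − 112·log 2 − 28√2·log(1+√2)). -/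
open Real MeasureTheory Set
open scoped ENNReal NNReal

noncomputable def myF (x : ℝ) : ℝ :=
  x^7/7 - (1/4)*Real.log (1+x) - (1/8)*Real.log (1+x^2) + (1/4)*Real.arctan x
  - (1/8)*Real.log (1+x^4)
  + (Real.sqrt 2/8)*(Real.arctan (Real.sqrt 2*x - 1) + Real.arctan (Real.sqrt 2*x + 1))
  + (Real.sqrt 2/16)*(Real.log (x^2 - Real.sqrt 2*x + 1) - Real.log (x^2 + Real.sqrt 2*x + 1))

noncomputable def myr (x : ℝ) : ℝ :=
  x^6 - (1/4)/(1+x) + (1/4)*(1-x)/(1+x^2) + (1/2)*(x^2-x^3)/(1+x^4)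

lemma sqrt2_sq : (Real.sqrt 2)^2 = 2 := Real.sq_sqrt (by norm_num)

lemma sqrt2_pos : (0:ℝ) < Real.sqrt 2 := Real.sqrt_pos.mpr (by norm_num)

lemma quad_pos_s17 (x : ℝ) : 0 < x^2 - Real.sqrt 2*x + 1 := by
  nlinarith [sq_nonneg (x - Real.sqrt 2/2), sqrt2_sq]

lemma quad_pos' (x : ℝ) : 0 < x^2 + Real.sqrt 2*x + 1 := by
  nlinarith [sq_nonneg (x + Real.sqrt 2/2), sqrt2_sq]

lemma myF_deriv {x : ℝ} (hx : 0 ≤ x) : HasDerivAt myF (myr x) x := by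
  set s := Real.sqrt 2 with hsdef
  have hs : s^2 = 2 := sqrt2_sq
  have hs0 : (0:ℝ) < s := sqrt2_pos
  have h1x : (0:ℝ) < 1 + x := by linarith
  have h1x2 : (0:ℝ) < 1 + x^2 := by positivity
  have h1x4 : (0:ℝ) < 1 + x^4 := by positivity
  have hq1 : (0:ℝ) < x^2 - s*x + 1 := quad_pos_s17 x
  have hq2 : (0:ℝ) < x^2 + s*x + 1 := quad_pos' x
  have hA : HasDerivAt (fun y : ℝ => y^7/7) (x^6) x := by
    simpa using (hasDerivAt_pow 7 x).div_const 7
  have hB : HasDerivAt (fun y : ℝ => Real.log (1+y)) (1/(1+x)) x := by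
    simpa using ((hasDerivAt_id x).const_add (1:ℝ)).log h1x.ne'
  have hC : HasDerivAt (fun y : ℝ => Real.log (1+y^2)) ((2*x)/(1+x^2)) x := by
    simpa using ((hasDerivAt_pow 2 x).const_add (1:ℝ)).log h1x2.ne'
  have hD : HasDerivAt (fun y : ℝ => Real.arctan y) (1/(1+x^2)) x := Real.hasDerivAt_arctan x
  have hE : HasDerivAt (fun y : ℝ => Real.log (1+y^4)) ((4*x^3)/(1+x^4)) x := by
    simpa using ((hasDerivAt_pow 4 x).const_add (1:ℝ)).log h1x4.ne'
  have hF1 : HasDerivAt (fun y : ℝ => Real.arctan (s*y-1)) (s/(1+(s*x-1)^2)) x := by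
    simpa [div_eq_inv_mul] using (((hasDerivAt_id x).const_mul s).sub_const 1).arctan
  have hF2 : HasDerivAt (fun y : ℝ => Real.arctan (s*y+1)) (s/(1+(s*x+1)^2)) x := by
    simpa [div_eq_inv_mul] using (((hasDerivAt_id x).const_mul s).add_const 1).arctan
  have hG1 : HasDerivAt (fun y : ℝ => Real.log (y^2 - s*y + 1)) ((2*x-s)/(x^2-s*x+1)) x := by
    have : HasDerivAt (fun y : ℝ => y^2 - s*y + 1) (2*x-s) x := by
      simpa using ((hasDerivAt_pow 2 x).sub ((hasDerivAt_id x).const_mul s)).add_const 1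
    simpa using this.log hq1.ne'
  have hG2 : HasDerivAt (fun y : ℝ => Real.log (y^2 + s*y + 1)) ((2*x+s)/(x^2+s*x+1)) x := by
    have : HasDerivAt (fun y : ℝ => y^2 + s*y + 1) (2*x+s) x := by
      simpa using ((hasDerivAt_pow 2 x).add ((hasDerivAt_id x).const_mul s)).add_const 1
    simpa using this.log hq2.ne'
  have hd1 : 1+(s*x-1)^2 = 2*(x^2 - s*x + 1) := by linear_combination x^2*hs
  have hd2 : 1+(s*x+1)^2 = 2*(x^2 + s*x + 1) := by linear_combination x^2*hs
  have key := ((((((hA.sub (hB.const_mul (1/4))).sub (hC.const_mul (1/8))).add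
      (hD.const_mul (1/4))).sub (hE.const_mul (1/8))).add
      ((hF1.add hF2).const_mul (s/8))).add ((hG1.sub hG2).const_mul (s/16)))
  convert key using 1
  · rfl
  · rfl
  · rfl
  rw [hd1, hd2, myr]
  have hq1' := hq1.ne'
  have hq2' := hq2.ne'
  field_simp
  have hs3 : s^3 = 2*s := by linear_combination s*hs
  have hs4 : s^4 = 4 := by linear_combination (s^2+2)*hs
  have hc1 : 1 - x*s + x^2 ≠ 0 := by nlinarith
  have hc2 : 1 + x*s + x^2 ≠ 0 := by nlinarith
  ring_nf
  field_simp
  have hs5 : s^5 = 4*s := by linear_combination (s^3+2*s)*hs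
  have hs6 : s^6 = 8 := by linear_combination (s^4+2*s^2+4)*hs
  ring_nf
  simp only [hs, hs3, hs4, hs5, hs6]
  ring_nf


lemma myF_zero : myF 0 = 0 := by
  rw [myF]
  norm_num [Real.arctan_neg, Real.arctan_one]

lemma myF_one : myF 1 = 1/7 - (1/2)*Real.log 2 + Real.pi/16 + Real.sqrt 2*Real.pi/16
    - Real.sqrt 2 * Real.log (1+Real.sqrt 2)/8 := by
  rw [myF]
  set s := Real.sqrt 2 with hsdef
  have hs : s^2 = 2 := sqrt2_sq
  have hs0 : (0:ℝ) < s := sqrt2_pos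
  have hs2 : s < 2 := by nlinarith
  have e1 : Real.arctan (s*1 - 1) + Real.arctan (s*1 + 1) = Real.pi/2 := by
    have hmul : (s-1)*(s+1) = 1 := by linear_combination hs
    have hinv : s - 1 = (s+1)⁻¹ := eq_inv_of_mul_eq_one_left hmul
    rw [show s*1-1 = s-1 by ring, show s*1+1 = s+1 by ring, hinv,
      Real.arctan_inv_of_pos (by linarith)]
    ring
  have e2 : Real.log ((1:ℝ)^2 + s*1 + 1) = 2*Real.log (1+s) + Real.log ((1:ℝ)^2 - s*1 + 1) := by
    have h1 : ((1:ℝ)^2 + s*1 + 1) = (1+s)^2 * ((1:ℝ)^2 - s*1 + 1) := by linear_combination s*hs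
    rw [h1, Real.log_mul (by positivity) (by nlinarith), Real.log_pow]
    push_cast; ring
  rw [e1, e2]
  norm_num [Real.arctan_one]
  ring

lemma myr_contOn : ContinuousOn myr (Set.Icc (0:ℝ) 1) := by
  have h1 : ∀ x ∈ Set.Icc (0:ℝ) 1, (1:ℝ) + x ≠ 0 := fun x hx => by
    have := hx.1; positivity
  have h2 : ∀ x ∈ Set.Icc (0:ℝ) 1, (1:ℝ) + x^2 ≠ 0 := fun x hx => by positivity
  have h3 : ∀ x ∈ Set.Icc (0:ℝ) 1, (1:ℝ) + x^4 ≠ 0 := fun x hx => by positivity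
  unfold myr
  exact (((continuousOn_pow 6).sub
      (continuousOn_const.div ((continuous_const.add continuous_id).continuousOn) h1)).add
      ((continuousOn_const.mul ((continuous_const.sub continuous_id).continuousOn)).div
        ((continuous_const.add (continuous_pow 2)).continuousOn) h2)).add
      ((continuousOn_const.mul (((continuous_pow 2).sub (continuous_pow 3)).continuousOn)).div
        ((continuous_const.add (continuous_pow 4)).continuousOn) h3)

lemma integral_myr : ∫ x in (0:ℝ)..1, myr x = myF 1 - myF 0 := by
  apply intervalIntegral.integral_eq_sub_of_hasDerivAt
  · intro x hx
    rw [Set.uIcc_of_le zero_le_one] at hx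
    exact myF_deriv hx.1
  · apply ContinuousOn.intervalIntegrable
    rw [Set.uIcc_of_le zero_le_one]
    exact myr_contOn

lemma sum_c : ∑' m : ℕ, ((1:ℝ)/(8*m+8) - 1/(8*m+15)) = myF 1 - myF 0 := by
  set c : ℕ → ℝ := fun m => (1:ℝ)/(8*m+8) - 1/(8*m+15) with hc
  have hc_nonneg : ∀ m : ℕ, 0 ≤ c m := by
    intro m
    have h1 : (0:ℝ) < 8*(m:ℝ)+8 := by positivity
    rw [hc, sub_nonneg]
    apply one_div_le_one_div_of_le h1 (by linarith)
  have hsum : Summable c := by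
    have base : Summable (fun n : ℕ => 1/(n:ℝ)^2) := summable_one_div_nat_pow.mpr one_lt_two
    have shifted : Summable (fun n : ℕ => 1/((n:ℝ)+1)^2) := by
      have := (summable_nat_add_iff (f := fun n : ℕ => 1/(n:ℝ)^2) 1).2 base
      refine this.congr fun n => ?_
      push_cast; ring
    refine Summable.of_nonneg_of_le hc_nonneg (fun m => ?_) shifted
    have hm : (0:ℝ) ≤ (m:ℝ) := m.cast_nonneg
    have e : c m = 7/((8*(m:ℝ)+8)*(8*(m:ℝ)+15)) := by
      rw [hc]; field_simp; ring
    rw [e, div_le_div_iff₀ (by positivity) (by positivity)]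
    nlinarith [sq_nonneg (m:ℝ)]
  have hint : ∀ m : ℕ, ∫ x in Set.Ioo (0:ℝ) 1, (x^(8*m+7) - x^(8*m+14)) = c m := by
    intro m
    rw [← MeasureTheory.integral_Ioc_eq_integral_Ioo,
      ← intervalIntegral.integral_of_le zero_le_one,
      intervalIntegral.integral_sub ((continuous_pow _).intervalIntegrable _ _)
        ((continuous_pow _).intervalIntegrable _ _),
      integral_pow, integral_pow]
    rw [hc]
    push_cast
    rw [one_pow, one_pow, zero_pow (by omega), zero_pow (by omega)]
    norm_num
    ring
  have hnn : ∀ m : ℕ, ∀ x ∈ Set.Ioo (0:ℝ) 1, 0 ≤ x^(8*m+7) - x^(8*m+14) := by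
    intro m x hx
    have := pow_le_pow_of_le_one hx.1.le hx.2.le (show 8*m+7 ≤ 8*m+14 by omega)
    linarith
  have hintg : ∀ m : ℕ, MeasureTheory.IntegrableOn
      (fun x : ℝ => x^(8*m+7) - x^(8*m+14)) (Set.Ioo 0 1) := by
    intro m
    exact (((continuous_pow (8*m+7)).sub (continuous_pow (8*m+14))).integrableOn_Icc).mono_set
      Set.Ioo_subset_Icc_self
  have hlin : ∀ m : ℕ, ∫⁻ x in Set.Ioo (0:ℝ) 1, ‖x^(8*m+7) - x^(8*m+14)‖ₑ = ENNReal.ofReal (c m) := by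
    intro m
    have heq : ∀ᵐ x ∂(MeasureTheory.volume.restrict (Set.Ioo (0:ℝ) 1)),
        (‖x^(8*m+7) - x^(8*m+14)‖ₑ : ℝ≥0∞) = ENNReal.ofReal (x^(8*m+7) - x^(8*m+14)) := by
      filter_upwards [MeasureTheory.ae_restrict_mem measurableSet_Ioo] with x hx
      exact Real.enorm_eq_ofReal (hnn m x hx)
    rw [MeasureTheory.lintegral_congr_ae heq,
      ← MeasureTheory.ofReal_integral_eq_lintegral_ofReal (hintg m)
        (by filter_upwards [MeasureTheory.ae_restrict_mem measurableSet_Ioo] with x hx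
            exact hnn m x hx),
      hint m]
  have hG : ∫ x in Set.Ioo (0:ℝ) 1, (∑' m : ℕ, (x^(8*m+7) - x^(8*m+14)))
      = ∑' m : ℕ, ∫ x in Set.Ioo (0:ℝ) 1, (x^(8*m+7) - x^(8*m+14)) := by
    apply MeasureTheory.integral_tsum
    · exact fun m => (((continuous_pow _).sub (continuous_pow _)).aestronglyMeasurable)
    · simp_rw [hlin]
      rw [← ENNReal.ofReal_tsum_of_nonneg hc_nonneg hsum]
      exact ENNReal.ofReal_ne_top
  have hpt : ∀ x ∈ Set.Ioo (0:ℝ) 1, (∑' m : ℕ, (x^(8*m+7) - x^(8*m+14))) = myr x := by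
    intro x hx
    have h0 : 0 < x := hx.1
    have h1 : x < 1 := hx.2
    have hx8 : x^8 < 1 := pow_lt_one₀ h0.le h1 (by norm_num)
    have hgs : HasSum (fun m : ℕ => (x^7 - x^14) * (x^8)^m) ((x^7-x^14) * (1 - x^8)⁻¹) :=
      (hasSum_geometric_of_lt_one (by positivity) hx8).mul_left _
    have hfun : (fun m : ℕ => x^(8*m+7) - x^(8*m+14)) = fun m : ℕ => (x^7-x^14) * (x^8)^m := by
      funext m; rw [← pow_mul]; ring
    rw [hfun, hgs.tsum_eq, myr]
    have d1 : (1:ℝ) + x ≠ 0 := by positivity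
    have d2 : (1:ℝ) + x^2 ≠ 0 := by positivity
    have d3 : (1:ℝ) + x^4 ≠ 0 := by positivity
    have d4 : (1:ℝ) - x^8 ≠ 0 := by nlinarith
    field_simp
    ring
  calc ∑' m : ℕ, c m = ∑' m : ℕ, ∫ x in Set.Ioo (0:ℝ) 1, (x^(8*m+7) - x^(8*m+14)) :=
        tsum_congr fun m => (hint m).symm
    _ = ∫ x in Set.Ioo (0:ℝ) 1, (∑' m : ℕ, (x^(8*m+7) - x^(8*m+14))) := hG.symm
    _ = ∫ x in Set.Ioo (0:ℝ) 1, myr x :=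
        MeasureTheory.setIntegral_congr_fun measurableSet_Ioo hpt
    _ = ∫ x in (0:ℝ)..1, myr x := by
        rw [intervalIntegral.integral_of_le zero_le_one,
          MeasureTheory.integral_Ioc_eq_integral_Ioo]
    _ = myF 1 - myF 0 := integral_myr

theorem stmt_17 :
    (∑' m : ℕ, (15/8 : ℝ) / ((m + 1) * (m + (15/8 : ℝ)))) = (15/196) * (32 + 14 * (1 + Real.sqrt 2) * Real.pi - 112 * Real.log 2 - 28 * Real.sqrt 2 * Real.log (1 + Real.sqrt 2)) := by
  have hterm : ∀ m : ℕ, (15/8 : ℝ) / ((m + 1) * (m + (15/8 : ℝ)))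
      = (120/7) * ((1:ℝ)/(8*m+8) - 1/(8*m+15)) := by
    intro m
    have h1 : (0:ℝ) < (m:ℝ) + 1 := by positivity
    have h2 : (0:ℝ) < (m:ℝ) + 15/8 := by positivity
    have h3 : (0:ℝ) < 8*(m:ℝ) + 8 := by positivity
    have h4 : (0:ℝ) < 8*(m:ℝ) + 15 := by positivity
    field_simp
    ring
  rw [tsum_congr hterm, tsum_mul_left, sum_c, myF_one, myF_zero]
  ring
end

section
/- The series ∑_{m=0}^∞ a/((m+1)(m+a)) with a = 5/3 equals (5√3/12)·(3√3·(1 − log 3) + π). -/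
open MeasureTheory Set Real

private lemma aux_pos (x : ℝ) : 0 < x^2 + x + 1 := by nlinarith [sq_nonneg (2*x+1)]

private lemma aux_integral_g (m : ℕ) :
    ∫ x in Set.Ioo (0:ℝ) 1, (x ^ (3*m+2) - x ^ (3*m+4)) =
      1/(3*(m:ℝ)+3) - 1/(3*(m:ℝ)+5) := by
  rw [← integral_Ioc_eq_integral_Ioo, ← intervalIntegral.integral_of_le (by norm_num : (0:ℝ) ≤ 1)]
  rw [intervalIntegral.integral_sub (intervalIntegral.intervalIntegrable_pow _)
    (intervalIntegral.intervalIntegrable_pow _), integral_pow, integral_pow]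
  push_cast
  norm_num
  ring

private lemma aux_summable :
    Summable (fun m : ℕ => 1/(3*(m:ℝ)+3) - 1/(3*(m:ℝ)+5)) := by
  have h : Summable (fun m : ℕ => 1/((m:ℝ)+1)^2) := by
    have h2 := Real.summable_one_div_nat_pow.mpr (by norm_num : 1 < 2)
    have := (summable_nat_add_iff 1).mpr h2
    simpa using this
  refine Summable.of_nonneg_of_le (fun m => ?_) (fun m => ?_) h
  · have hm : (0:ℝ) ≤ m := Nat.cast_nonneg m
    have : 1/(3*(m:ℝ)+5) ≤ 1/(3*(m:ℝ)+3) := by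
      apply one_div_le_one_div_of_le <;> linarith
    linarith
  · have hm : (0:ℝ) ≤ m := Nat.cast_nonneg m
    rw [div_sub_div _ _ (by positivity) (by positivity),
      div_le_div_iff₀ (by positivity) (by positivity)]
    nlinarith

private lemma aux_inner (x : ℝ) (hx : x ∈ Set.Ioo (0:ℝ) 1) :
    ∑' m : ℕ, (x ^ (3*m+2) - x ^ (3*m+4)) = (x^2 + x^3)/(x^2+x+1) := by
  obtain ⟨hx0, hx1⟩ := hx
  have h3 : (0:ℝ) ≤ x^3 := by positivity
  have h3' : x^3 < 1 := pow_lt_one₀ hx0.le hx1 (by norm_num)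
  have key : ∀ m : ℕ, x ^ (3*m+2) - x ^ (3*m+4) = (x^2 - x^4) * (x^3)^m := by
    intro m
    rw [pow_add, pow_add, ← pow_mul]
    ring
  simp_rw [key]
  rw [tsum_mul_left, tsum_geometric_of_lt_one h3 h3']
  have hne : 1 - x^3 ≠ 0 := by nlinarith
  have hne2 : x^2 + x + 1 ≠ 0 := (aux_pos x).ne'
  field_simp
  ring

private lemma aux_ftc :
    ∫ x in (0:ℝ)..1, (x^2+x^3)/(x^2+x+1) =
      1/2 - Real.log 3 / 2 + (Real.sqrt 3)⁻¹ * (π/3 - π/6) := by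
  have hs3 : Real.sqrt 3 * Real.sqrt 3 = 3 := Real.mul_self_sqrt (by norm_num)
  have hs3pos : 0 < Real.sqrt 3 := Real.sqrt_pos.mpr (by norm_num)
  set F : ℝ → ℝ := fun x =>
    x^2/2 - Real.log (x^2+x+1)/2 + (Real.sqrt 3)⁻¹ * Real.arctan ((2*x+1)/Real.sqrt 3) with hF
  have hderiv : ∀ x ∈ Set.uIcc (0:ℝ) 1, HasDerivAt F ((x^2+x^3)/(x^2+x+1)) x := by
    intro x _
    have h1 : HasDerivAt (fun y : ℝ => y^2/2) x x := by
      have := (hasDerivAt_pow 2 x).div_const 2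
      simpa using this
    have h2 : HasDerivAt (fun y : ℝ => y^2+y+1) (2*x+1) x := by
      have := ((hasDerivAt_pow 2 x).add (hasDerivAt_id x)).add_const 1
      simpa using this
    have hlog : HasDerivAt (fun y : ℝ => Real.log (y^2+y+1)/2)
        ((2*x+1)/(x^2+x+1)/2) x := (h2.log (aux_pos x).ne').div_const 2
    have hu : HasDerivAt (fun y : ℝ => (2*y+1)/Real.sqrt 3) (2/Real.sqrt 3) x := by
      have := (((hasDerivAt_id x).const_mul 2).add_const 1).div_const (Real.sqrt 3)
      simpa using this
    have harc : HasDerivAt (fun y : ℝ => (Real.sqrt 3)⁻¹ * Real.arctan ((2*y+1)/Real.sqrt 3))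
        ((Real.sqrt 3)⁻¹ * (1/(1+((2*x+1)/Real.sqrt 3)^2) * (2/Real.sqrt 3))) x :=
      ((Real.hasDerivAt_arctan ((2*x+1)/Real.sqrt 3)).comp x hu).const_mul _
    have := (h1.sub hlog).add harc
    refine this.congr_deriv (Eq.symm ?_)
    have hsq : Real.sqrt 3 ^ 2 = 3 := Real.sq_sqrt (by norm_num)
    have hd : 1+((2*x+1)/Real.sqrt 3)^2 = (4*(x^2+x+1))/3 := by
      rw [div_pow, hsq]
      field_simp
      ring
    rw [hd]
    have hne2 : x^2 + x + 1 ≠ 0 := (aux_pos x).ne'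
    have hne3 : x * (x + 1) + 1 ≠ 0 := (by nlinarith [sq_nonneg (2*x+1)] : (0:ℝ) < x * (x + 1) + 1).ne'
    field_simp
    linear_combination 4 * hsq
  have hcont : Continuous (fun x : ℝ => (x^2+x^3)/(x^2+x+1)) := by
    apply Continuous.div (by continuity) (by continuity)
    exact fun x => (aux_pos x).ne'
  rw [intervalIntegral.integral_eq_sub_of_hasDerivAt hderiv
    (hcont.intervalIntegrable 0 1)]
  have ha1 : Real.arctan ((2*(1:ℝ)+1)/Real.sqrt 3) = π/3 := by
    have : (2*(1:ℝ)+1)/Real.sqrt 3 = Real.sqrt 3 := by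
      rw [div_eq_iff hs3pos.ne', hs3]; norm_num
    rw [this, ← Real.tan_pi_div_three,
      Real.arctan_tan (by linarith [Real.pi_pos]) (by linarith [Real.pi_pos])]
  have ha2 : Real.arctan ((2*(0:ℝ)+1)/Real.sqrt 3) = π/6 := by
    have h : (2*(0:ℝ)+1)/Real.sqrt 3 = 1/Real.sqrt 3 := by norm_num
    rw [h, ← Real.tan_pi_div_six,
      Real.arctan_tan (by linarith [Real.pi_pos]) (by linarith [Real.pi_pos])]
  rw [hF]
  simp only
  rw [ha1, ha2]
  norm_num
  ring

theorem stmt_18 :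
    (∑' m : ℕ, (5/3 : ℝ) / ((m + 1) * (m + (5/3 : ℝ)))) = (5 * Real.sqrt 3 / 12) * (3 * Real.sqrt 3 * (1 - Real.log 3) + Real.pi) := by
  have hterm : ∀ m : ℕ, (5/3 : ℝ) / ((m + 1) * (m + (5/3 : ℝ)))
      = (15/2) * (1/(3*(m:ℝ)+3) - 1/(3*(m:ℝ)+5)) := by
    intro m
    have h1 : ((m:ℝ)+1) ≠ 0 := by positivity
    have h2 : ((m:ℝ)+5/3) ≠ 0 := by positivity
    have h3 : (3*(m:ℝ)+3) ≠ 0 := by positivity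
    have h4 : (3*(m:ℝ)+5) ≠ 0 := by positivity
    field_simp
    ring
  simp_rw [hterm]
  rw [tsum_mul_left]
  have hint : ∀ m : ℕ, IntegrableOn (fun x : ℝ => x ^ (3*m+2) - x ^ (3*m+4)) (Set.Ioo 0 1) := by
    intro m
    exact (((continuous_pow _).sub (continuous_pow _)).integrableOn_Icc).mono_set
      Set.Ioo_subset_Icc_self
  have hnorm : ∀ m : ℕ, (∫ x in Set.Ioo (0:ℝ) 1, ‖x ^ (3*m+2) - x ^ (3*m+4)‖)
      = 1/(3*(m:ℝ)+3) - 1/(3*(m:ℝ)+5) := by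
    intro m
    rw [← aux_integral_g m]
    apply setIntegral_congr_fun measurableSet_Ioo
    intro x hx
    obtain ⟨hx0, hx1⟩ := hx
    have hle : 0 ≤ x ^ (3*m+2) - x ^ (3*m+4) := by
      have := pow_le_pow_of_le_one hx0.le hx1.le (by omega : 3*m+2 ≤ 3*m+4)
      linarith
    exact Real.norm_of_nonneg hle
  have hswap := MeasureTheory.integral_tsum_of_summable_integral_norm
      (F := fun (m : ℕ) (x : ℝ) => x ^ (3*m+2) - x ^ (3*m+4))
      (μ := MeasureTheory.volume.restrict (Set.Ioo 0 1)) hint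
      (by simp_rw [hnorm]; exact aux_summable)
  have hsum : (∑' m : ℕ, (1/(3*(m:ℝ)+3) - 1/(3*(m:ℝ)+5)))
      = 1/2 - Real.log 3 / 2 + (Real.sqrt 3)⁻¹ * (π/3 - π/6) := by
    calc (∑' m : ℕ, (1/(3*(m:ℝ)+3) - 1/(3*(m:ℝ)+5)))
        = ∑' m : ℕ, ∫ x in Set.Ioo (0:ℝ) 1, (x ^ (3*m+2) - x ^ (3*m+4)) :=
          tsum_congr fun m => (aux_integral_g m).symm
      _ = ∫ x in Set.Ioo (0:ℝ) 1, ∑' m : ℕ, (x ^ (3*m+2) - x ^ (3*m+4)) := hswap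
      _ = ∫ x in Set.Ioo (0:ℝ) 1, (x^2 + x^3)/(x^2+x+1) :=
          setIntegral_congr_fun measurableSet_Ioo fun x hx => aux_inner x hx
      _ = ∫ x in (0:ℝ)..1, (x^2+x^3)/(x^2+x+1) := by
          rw [intervalIntegral.integral_of_le (by norm_num : (0:ℝ) ≤ 1),
            integral_Ioc_eq_integral_Ioo]
      _ = 1/2 - Real.log 3 / 2 + (Real.sqrt 3)⁻¹ * (π/3 - π/6) := aux_ftc
  rw [hsum]
  have hs3 : Real.sqrt 3 * Real.sqrt 3 = 3 := Real.mul_self_sqrt (by norm_num)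
  have hs3pos : 0 < Real.sqrt 3 := Real.sqrt_pos.mpr (by norm_num)
  have hinv : (Real.sqrt 3)⁻¹ = Real.sqrt 3 / 3 := by
    rw [eq_div_iff (by norm_num : (3:ℝ) ≠ 0), inv_mul_eq_div, div_eq_iff hs3pos.ne']; linarith [hs3]
  rw [hinv]
  linear_combination (-(5/4)*(1 - Real.log 3)) * hs3
end
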